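/- arXiv:2604.07715 — 5 statements merged into one kernel-verified Lean document; each statement's English description precedes it below -/
import Mathlib

section
/- Let T : L²(0,1) ⊕ ℝ² → L²(0,1) be defined by T(ψ,b,c)(x) = ∫₀¹ ReLU(x−z)ψ(z) dz + b + c·x. Then the kernel of T is trivial: T(ψ,b,c) = 0 implies ψ = 0 in L²(0,1), b = 0, and c = 0. -/
open MeasureTheory Set
open Filter Topology

/-- The kernel of `T(ψ,b,c)(x) = ∫₀¹ ReLU(x−z)ψ(z) dz + b + c·x` on
`L²(0,1) ⊕ ℝ²` is trivial. -/
theorem stmt_1 (ψ : ℝ → ℝ) (b c : ℝ)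
    (hψ : MemLp ψ 2 (volume.restrict (Ioo (0:ℝ) 1)))
    (h : ∀ᵐ x ∂(volume.restrict (Ioo (0:ℝ) 1)),
      (∫ z in Ioo (0:ℝ) 1, max 0 (x - z) * ψ z) + b + c * x = 0) :
    (∀ᵐ x ∂(volume.restrict (Ioo (0:ℝ) 1)), ψ x = 0) ∧ b = 0 ∧ c = 0 := by
  have hIoo : MeasurableSet (Ioo (0:ℝ) 1) := measurableSet_Ioo
  have hfin : IsFiniteMeasure (volume.restrict (Ioo (0:ℝ) 1)) := by
    constructor; rw [Measure.restrict_apply_univ]; simp [Real.volume_Ioo]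
  have hψi : IntegrableOn ψ (Ioo (0:ℝ) 1) := hψ.integrable one_le_two
  set f : ℝ → ℝ := (Ioo (0:ℝ) 1).indicator ψ with hfdef
  have hfi : Integrable f := (integrable_indicator_iff hIoo).2 hψi
  have hfI : ∀ u v : ℝ, IntervalIntegrable f volume u v := fun u v => hfi.intervalIntegrable
  have hFI : ∀ u v : ℝ, IntervalIntegrable (fun z => |f z|) volume u v :=
    fun u v => hfi.abs.intervalIntegrable
  set P : ℝ → ℝ := fun t => ∫ z in (0:ℝ)..t, f z with hPdef
  set Q : ℝ → ℝ := fun t => ∫ z in (0:ℝ)..t, |f z| with hQdef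
  have hPcont : Continuous P := intervalIntegral.continuous_primitive hfI 0
  have hQcont : Continuous Q := intervalIntegral.continuous_primitive hFI 0
  set g : ℝ → ℝ := fun x => ∫ z in Ioo (0:ℝ) 1, max 0 (x - z) * ψ z with hgdef
  -- integrability of the integrand of g
  have hginteg : ∀ x : ℝ, IntegrableOn (fun z => max 0 (x - z) * ψ z) (Ioo (0:ℝ) 1) := by
    intro x
    refine Integrable.mono' (hψi.norm.const_mul (|x|)) ?_ ?_
    · exact ((continuous_const.max (continuous_const.sub continuous_id)).aestronglyMeasurable).mul
        hψ.aestronglyMeasurable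
    · refine (ae_restrict_iff' hIoo).2 (ae_of_all _ fun z hz => ?_)
      have h1 : max 0 (x - z) ≤ |x| := by
        have : x - z ≤ x := by linarith [hz.1]
        exact max_le (abs_nonneg x) (le_trans this (le_abs_self x))
      have h2 : (0:ℝ) ≤ max 0 (x - z) := le_max_left _ _
      calc ‖max 0 (x - z) * ψ z‖ = max 0 (x - z) * |ψ z| := by
            rw [Real.norm_eq_abs, abs_mul, abs_of_nonneg h2]
        _ ≤ |x| * |ψ z| := mul_le_mul_of_nonneg_right h1 (abs_nonneg _)
        _ = |x| * ‖ψ z‖ := rfl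
  -- g is Lipschitz, hence continuous
  have hgcont : Continuous g := by
    set M : ℝ := ∫ z in Ioo (0:ℝ) 1, |ψ z| with hM
    have hM0 : 0 ≤ M := integral_nonneg fun z => abs_nonneg _
    refine (LipschitzWith.of_dist_le_mul (K := M.toNNReal) (fun x y => ?_)).continuous
    have hsub : g x - g y = ∫ z in Ioo (0:ℝ) 1, (max 0 (x - z) - max 0 (y - z)) * ψ z := by
      rw [hgdef]; simp only
      rw [← integral_sub (hginteg x) (hginteg y)]
      congr 1; funext z; ring
    have hbd : ‖∫ z in Ioo (0:ℝ) 1, (max 0 (x - z) - max 0 (y - z)) * ψ z‖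
        ≤ ∫ z in Ioo (0:ℝ) 1, |x - y| * |ψ z| := by
      refine norm_integral_le_of_norm_le (hψi.norm.const_mul (|x - y|)) (ae_of_all _ fun z => ?_)
      rw [Real.norm_eq_abs, abs_mul]
      refine mul_le_mul_of_nonneg_right ?_ (abs_nonneg _)
      have := abs_max_sub_max_le_abs (x - z) (y - z) 0
      simpa [max_comm] using this
    rw [Real.dist_eq, Real.dist_eq, ← Real.norm_eq_abs, hsub]
    calc ‖∫ z in Ioo (0:ℝ) 1, (max 0 (x - z) - max 0 (y - z)) * ψ z‖
        ≤ ∫ z in Ioo (0:ℝ) 1, |x - y| * |ψ z| := hbd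
      _ = |x - y| * M := by rw [hM, integral_const_mul]
      _ = (M.toNNReal : ℝ) * |x - y| := by rw [Real.coe_toNNReal M hM0]; ring
  -- the equation holds pointwise on (0,1)
  have hG : ∀ x ∈ Ioo (0:ℝ) 1, g x + b + c * x = 0 := by
    have hGc : Continuous (fun x => g x + b + c * x) :=
      ((hgcont.add continuous_const).add (continuous_const.mul continuous_id))
    have := Measure.eqOn_of_ae_eq (μ := volume) (s := Ioo (0:ℝ) 1)
      (f := fun x => g x + b + c * x) (g := fun _ => (0:ℝ)) h hGc.continuousOn
      continuousOn_const ?_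
    · exact fun x hx => this hx
    · rw [interior_Ioo]; exact subset_closure
  -- P x is the integral of ψ over Ioo 0 x, for 0 ≤ x ≤ 1
  have hPx : ∀ x : ℝ, 0 ≤ x → x ≤ 1 → P x = ∫ z in Ioo (0:ℝ) x, ψ z := by
    intro x h0 h1
    rw [hPdef]; simp only
    rw [intervalIntegral.integral_of_le h0, integral_Ioc_eq_integral_Ioo]
    refine setIntegral_congr_fun measurableSet_Ioo fun z hz => ?_
    have : z ∈ Ioo (0:ℝ) 1 := ⟨hz.1, lt_of_lt_of_le hz.2 h1⟩
    exact indicator_of_mem this ψ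
  -- main difference-quotient estimate
  have key : ∀ x ∈ Ioo (0:ℝ) 1, ∀ y ∈ Ioo (0:ℝ) 1,
      |g y - g x - (y - x) * P x| ≤ 2 * |y - x| * ∫ z in uIcc x y, |ψ z| := by
    intro x hx y hy
    rw [hPx x hx.1.le hx.2.le, hgdef]; simp only
    have huIcc : uIcc x y ⊆ Ioo (0:ℝ) 1 := by
      rw [uIcc]
      exact Icc_subset_Ioo (lt_min hx.1 hy.1) (max_lt hx.2 hy.2)
    have hind : IntegrableOn
        (fun z => (y - x) * ((Ioo (0:ℝ) x).indicator (fun _ => (1:ℝ)) z * ψ z)) (Ioo (0:ℝ) 1) := by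
      have : (fun z => (y - x) * ((Ioo (0:ℝ) x).indicator (fun _ => (1:ℝ)) z * ψ z))
          = fun z => (y - x) * (Ioo (0:ℝ) x).indicator ψ z := by
        funext z
        by_cases hz : z ∈ Ioo (0:ℝ) x <;> simp [hz]
      rw [this]
      exact ((hψi.indicator measurableSet_Ioo).const_mul _)
    have h1 : (y - x) * (∫ z in Ioo (0:ℝ) x, ψ z)
        = ∫ z in Ioo (0:ℝ) 1, (y - x) * ((Ioo (0:ℝ) x).indicator (fun _ => (1:ℝ)) z * ψ z) := by
      rw [integral_const_mul]
      congr 1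
      have heq : (fun z => (Ioo (0:ℝ) x).indicator (fun _ => (1:ℝ)) z * ψ z)
          = (Ioo (0:ℝ) x).indicator ψ := by
        funext z; by_cases hz : z ∈ Ioo (0:ℝ) x <;> simp [hz]
      rw [heq, setIntegral_indicator measurableSet_Ioo,
        inter_eq_self_of_subset_right (Ioo_subset_Ioo_right hx.2.le)]
    have h2 : (∫ z in Ioo (0:ℝ) 1, max 0 (y - z) * ψ z)
        - (∫ z in Ioo (0:ℝ) 1, max 0 (x - z) * ψ z)
        - (y - x) * ∫ z in Ioo (0:ℝ) x, ψ z
        = ∫ z in Ioo (0:ℝ) 1,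
            (max 0 (y - z) - max 0 (x - z) - (y - x) * (Ioo (0:ℝ) x).indicator (fun _ => (1:ℝ)) z)
              * ψ z := by
      have hAB : IntegrableOn (fun z => max 0 (y - z) * ψ z - max 0 (x - z) * ψ z)
          (Ioo (0:ℝ) 1) := (hginteg y).sub (hginteg x)
      rw [h1, ← integral_sub (hginteg y) (hginteg x), ← integral_sub hAB hind]
      congr 1; funext z; ring
    rw [h2]
    have h3 : ‖∫ z in Ioo (0:ℝ) 1,
        (max 0 (y - z) - max 0 (x - z) - (y - x) * (Ioo (0:ℝ) x).indicator (fun _ => (1:ℝ)) z)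
          * ψ z‖
        ≤ ∫ z in Ioo (0:ℝ) 1, (uIcc x y).indicator (fun z => 2 * |y - x| * |ψ z|) z := by
      refine norm_integral_le_of_norm_le
        ((hψi.norm.const_mul (2 * |y - x|)).indicator measurableSet_uIcc) ?_
      refine (ae_restrict_iff' hIoo).2 (ae_of_all _ fun z hz => ?_)
      by_cases hzu : z ∈ uIcc x y
      · rw [indicator_of_mem hzu, Real.norm_eq_abs, abs_mul]
        refine mul_le_mul_of_nonneg_right ?_ (abs_nonneg _)
        have e1 : |max 0 (y - z) - max 0 (x - z)| ≤ |y - x| := by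
          have := abs_max_sub_max_le_abs (y - z) (x - z) 0
          simpa [max_comm] using this
        have e2 : |(y - x) * (Ioo (0:ℝ) x).indicator (fun _ => (1:ℝ)) z| ≤ |y - x| := by
          rw [abs_mul]
          by_cases hzi : z ∈ Ioo (0:ℝ) x <;> simp [hzi, abs_nonneg]
        calc |max 0 (y - z) - max 0 (x - z) - (y - x) * (Ioo (0:ℝ) x).indicator (fun _ => (1:ℝ)) z|
            ≤ |max 0 (y - z) - max 0 (x - z)|
              + |(y - x) * (Ioo (0:ℝ) x).indicator (fun _ => (1:ℝ)) z| := abs_sub _ _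
          _ ≤ |y - x| + |y - x| := add_le_add e1 e2
          _ = 2 * |y - x| := by ring
      · rw [indicator_of_notMem hzu]
        have hd : max 0 (y - z) - max 0 (x - z)
            - (y - x) * (Ioo (0:ℝ) x).indicator (fun _ => (1:ℝ)) z = 0 := by
          rw [uIcc, mem_Icc, not_and_or] at hzu
          push_neg at hzu
          rcases hzu with hlt | hgt
          · rw [lt_min_iff] at hlt
            have hzi : z ∈ Ioo (0:ℝ) x := ⟨hz.1, hlt.1⟩
            rw [indicator_of_mem hzi, max_eq_right (by linarith [hlt.2] : (0:ℝ) ≤ y - z),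
              max_eq_right (by linarith [hlt.1] : (0:ℝ) ≤ x - z)]
            ring
          · rw [max_lt_iff] at hgt
            have hzi : z ∉ Ioo (0:ℝ) x := fun hmem => absurd hmem.2 (not_lt.2 hgt.1.le)
            rw [indicator_of_notMem hzi, max_eq_left (by linarith [hgt.2] : y - z ≤ 0),
              max_eq_left (by linarith [hgt.1] : x - z ≤ 0)]
            ring
        simp [hd]
    have h4 : (∫ z in Ioo (0:ℝ) 1, (uIcc x y).indicator (fun z => 2 * |y - x| * |ψ z|) z)
        = 2 * |y - x| * ∫ z in uIcc x y, |ψ z| := by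
      rw [setIntegral_indicator measurableSet_uIcc,
        inter_eq_self_of_subset_right huIcc, integral_const_mul]
    rw [← Real.norm_eq_abs]
    calc _ ≤ _ := h3
      _ = _ := h4
  -- P x = -c on (0,1)
  have hPc : ∀ x ∈ Ioo (0:ℝ) 1, P x = -c := by
    intro x hx
    have hbound : ∀ y ∈ Ioo x 1, |P x + c| ≤ 2 * (Q y - Q x) := by
      intro y hy
      have hy' : y ∈ Ioo (0:ℝ) 1 := ⟨lt_trans hx.1 hy.1, hy.2⟩
      have hk := key x hx y hy'
      have hxy : x < y := hy.1
      have hQ : (∫ z in uIcc x y, |ψ z|) = Q y - Q x := by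
        have hsub : Ioc x y ⊆ Ioo (0:ℝ) 1 :=
          fun z hz => ⟨lt_trans hx.1 hz.1, lt_of_le_of_lt hz.2 hy'.2⟩
        rw [uIcc_of_le hxy.le, integral_Icc_eq_integral_Ioc, hQdef]
        have : (∫ z in Ioc x y, |ψ z|) = ∫ z in Ioc x y, |f z| := by
          refine setIntegral_congr_fun measurableSet_Ioc fun z hz => ?_
          rw [hfdef, indicator_of_mem (hsub hz)]
        rw [this]
        simp only
        rw [← intervalIntegral.integral_of_le hxy.le,
          ← intervalIntegral.integral_interval_sub_left (hFI 0 y) (hFI 0 x)]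
      have hgsub : g y - g x = -((y - x) * c) := by
        have e1 := hG y hy'
        have e2 := hG x hx
        have : g y = -(b + c * y) := by linarith
        have : g x = -(b + c * x) := by linarith
        nlinarith [hG y hy', hG x hx]
      have e : g y - g x - (y - x) * P x = -((y - x) * (P x + c)) := by
        rw [hgsub]; ring
      rw [hQ, e, abs_neg, abs_mul, abs_of_pos (by linarith : (0:ℝ) < y - x)] at hk
      have hk2 : (y - x) * |P x + c| ≤ (y - x) * (2 * (Q y - Q x)) := by
        calc (y - x) * |P x + c| ≤ 2 * (y - x) * (Q y - Q x) := by linarith [hk]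
          _ = (y - x) * (2 * (Q y - Q x)) := by ring
      exact (mul_le_mul_iff_right₀ (by linarith : (0:ℝ) < y - x)).1 hk2
    have hne : (𝓝[Ioo x 1] x).NeBot := left_nhdsWithin_Ioo_neBot hx.2
    have htend : Tendsto (fun y => 2 * (Q y - Q x)) (𝓝[Ioo x 1] x) (𝓝 0) := by
      have : Tendsto (fun y => 2 * (Q y - Q x)) (𝓝 x) (𝓝 (2 * (Q x - Q x))) :=
        (continuous_const.mul (hQcont.sub continuous_const)).tendsto x
      simpa using this.mono_left nhdsWithin_le_nhds
    have h0 : |P x + c| ≤ 0 := ge_of_tendsto htend (eventually_nhdsWithin_of_forall hbound)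
    have : P x + c = 0 := abs_eq_zero.1 (le_antisymm h0 (abs_nonneg _))
    linarith
  have hne0 : (𝓝[Ioo (0:ℝ) 1] (0:ℝ)).NeBot := left_nhdsWithin_Ioo_neBot one_pos
  -- c = 0
  have hc : c = 0 := by
    have h1 : Tendsto P (𝓝[Ioo (0:ℝ) 1] 0) (𝓝 (P 0)) :=
      (hPcont.tendsto 0).mono_left nhdsWithin_le_nhds
    have h2 : Tendsto P (𝓝[Ioo (0:ℝ) 1] 0) (𝓝 (-c)) := by
      refine Tendsto.congr' ?_ tendsto_const_nhds
      filter_upwards [self_mem_nhdsWithin] with y hy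
      exact (hPc y hy).symm
    have hP00 : P 0 = 0 := by rw [hPdef]; simp
    have := tendsto_nhds_unique h1 h2
    rw [hP00] at this
    linarith
  -- b = 0
  have hb : b = 0 := by
    have hGc : Continuous (fun x => g x + b + c * x) :=
      ((hgcont.add continuous_const).add (continuous_const.mul continuous_id))
    have h1 : Tendsto (fun x => g x + b + c * x) (𝓝[Ioo (0:ℝ) 1] 0) (𝓝 (g 0 + b + c * 0)) :=
      (hGc.tendsto 0).mono_left nhdsWithin_le_nhds
    have h2 : Tendsto (fun x => g x + b + c * x) (𝓝[Ioo (0:ℝ) 1] 0) (𝓝 0) := by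
      refine Tendsto.congr' ?_ tendsto_const_nhds
      filter_upwards [self_mem_nhdsWithin] with y hy
      exact (hG y hy).symm
    have hg0 : g 0 = 0 := by
      rw [hgdef]; simp only
      have : (∫ z in Ioo (0:ℝ) 1, max 0 (0 - z) * ψ z) = ∫ z in Ioo (0:ℝ) 1, (0:ℝ) := by
        refine setIntegral_congr_fun hIoo fun z hz => ?_
        rw [max_eq_left (by linarith [hz.1] : 0 - z ≤ 0), zero_mul]
      rw [this, integral_zero]
    have := tendsto_nhds_unique h1 h2
    rw [hg0, hc] at this
    linarith
  -- P vanishes identically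
  have hP1 : P 1 = 0 := by
    have hne1 : (𝓝[Ioo (0:ℝ) 1] (1:ℝ)).NeBot := right_nhdsWithin_Ioo_neBot one_pos
    have h1 : Tendsto P (𝓝[Ioo (0:ℝ) 1] 1) (𝓝 (P 1)) :=
      (hPcont.tendsto 1).mono_left nhdsWithin_le_nhds
    have h2 : Tendsto P (𝓝[Ioo (0:ℝ) 1] 1) (𝓝 0) := by
      refine Tendsto.congr' ?_ tendsto_const_nhds
      filter_upwards [self_mem_nhdsWithin] with y hy
      rw [hPc y hy, hc, neg_zero]
    exact tendsto_nhds_unique h1 h2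
  have hP0 : ∀ t : ℝ, P t = 0 := by
    intro t
    rcases le_or_gt t 0 with ht | ht
    · rw [hPdef]; simp only
      rw [intervalIntegral.integral_of_ge ht]
      have : (∫ z in Ioc t 0, f z) = ∫ z in Ioc t 0, (0:ℝ) := by
        refine setIntegral_congr_fun measurableSet_Ioc fun z hz => ?_
        exact indicator_of_notMem (fun hmem => absurd hmem.1 (not_lt.2 hz.2)) ψ
      rw [this, integral_zero, neg_zero]
    · rcases lt_or_ge t 1 with ht1 | ht1
      · rw [hPc t ⟨ht, ht1⟩, hc, neg_zero]
      · have hadd : P 1 + ∫ z in (1:ℝ)..t, f z = P t :=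
          intervalIntegral.integral_add_adjacent_intervals (hfI 0 1) (hfI 1 t)
        have hz1 : (∫ z in (1:ℝ)..t, f z) = 0 := by
          rw [intervalIntegral.integral_of_le ht1]
          have : (∫ z in Ioc (1:ℝ) t, f z) = ∫ z in Ioc (1:ℝ) t, (0:ℝ) := by
            refine setIntegral_congr_fun measurableSet_Ioc fun z hz => ?_
            exact indicator_of_notMem (fun hmem => absurd hmem.2 (not_lt.2 hz.1.le)) ψ
          rw [this, integral_zero]
        rw [← hadd, hP1, hz1, add_zero]
  -- conclude ψ = 0 a.e. by the Lebesgue differentiation theorem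
  refine ⟨?_, hb, hc⟩
  have hae : ∀ᵐ x ∂(volume : Measure ℝ), f x = 0 := by
    filter_upwards [IsUnifLocDoublingMeasure.ae_tendsto_average (μ := (volume : Measure ℝ))
      hfi.locallyIntegrable 1] with x hx
    have htd : Tendsto (fun j : ℝ => j) (𝓝[>] (0:ℝ)) (𝓝[>] 0) := tendsto_id
    have hmem : ∀ᶠ j : ℝ in 𝓝[>] (0:ℝ), x ∈ Metric.closedBall x (1 * j) := by
      filter_upwards [self_mem_nhdsWithin] with j hj
      exact Metric.mem_closedBall_self (by simpa using le_of_lt hj)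
    have ht := hx (fun _ => x) (fun j => j) htd hmem
    have hzero : ∀ᶠ j : ℝ in 𝓝[>] (0:ℝ),
        (⨍ y in Metric.closedBall x j, f y ∂(volume : Measure ℝ)) = 0 := by
      filter_upwards [self_mem_nhdsWithin] with j hj
      have hij : (∫ y in Metric.closedBall x j, f y) = 0 := by
        rw [Real.closedBall_eq_Icc, integral_Icc_eq_integral_Ioc,
          ← intervalIntegral.integral_of_le (by linarith [le_of_lt (mem_Ioi.1 hj)] : x - j ≤ x + j),
          ← intervalIntegral.integral_interval_sub_left (hfI 0 (x + j)) (hfI 0 (x - j))]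
        show P (x + j) - P (x - j) = 0
        rw [hP0, hP0, sub_zero]
      rw [setAverage_eq, hij, smul_zero]
    have : Tendsto (fun _ : ℝ => (0:ℝ)) (𝓝[>] (0:ℝ)) (𝓝 (f x)) := Tendsto.congr' hzero ht
    exact tendsto_nhds_unique this tendsto_const_nhds
  have h2 : ∀ᵐ x ∂(volume.restrict (Ioo (0:ℝ) 1)), f x = ψ x :=
    (ae_restrict_iff' hIoo).2 (ae_of_all _ fun x hx => indicator_of_mem hx ψ)
  filter_upwards [ae_restrict_of_ae hae, h2] with x h1 h2
  rw [← h2, h1]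
end

section
/- Let T : L²(0,1) ⊕ ℝ² → L²(0,1) be defined by T(ψ,b,c)(x) = ∫₀¹ ReLU(x−z)ψ(z) dz + b + c·x, and let T* be its Hilbert-space adjoint. If g ∈ L²(0,1) satisfies T*g = 0, then g = 0. Equivalently, the self-adjoint operator TT* is injective (hence strictly positive). -/
open MeasureTheory Set

private lemma relu_lip_aux (x c : ℝ) :
    LipschitzWith (Real.nnabs c) (fun z : ℝ => max 0 (x - z) * c) := by
  apply LipschitzWith.of_dist_le_mul
  intro a b
  simp only [Real.dist_eq]
  have h1 : |max 0 (x - a) - max 0 (x - b)| ≤ |(x - a) - (x - b)| := by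
    simpa [max_comm] using abs_max_sub_max_le_abs (x - a) (x - b) 0
  have : |max 0 (x - a) * c - max 0 (x - b) * c|
      = |max 0 (x - a) - max 0 (x - b)| * |c| := by
    rw [← sub_mul, abs_mul]
  rw [this, Real.coe_nnabs]
  calc |max 0 (x - a) - max 0 (x - b)| * |c|
      ≤ |(x - a) - (x - b)| * |c| := by gcongr
    _ = |c| * |a - b| := by
        rw [show (x - a) - (x - b) = -(a - b) by ring, abs_neg, mul_comm]

/-- If `g ∈ L²(0,1)` satisfies `T*g = 0`, where
`T*g = (∫₀¹ ReLU(x−·)g(x)dx, ∫₀¹ g(x)dx, ∫₀¹ x·g(x)dx)`, then `g = 0`. -/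
theorem stmt_2 (g : ℝ → ℝ)
    (hg : MemLp g 2 (volume.restrict (Ioo (0:ℝ) 1)))
    (h1 : ∀ᵐ z ∂(volume.restrict (Ioo (0:ℝ) 1)),
      (∫ x in Ioo (0:ℝ) 1, max 0 (x - z) * g x) = 0)
    (h2 : (∫ x in Ioo (0:ℝ) 1, g x) = 0)
    (h3 : (∫ x in Ioo (0:ℝ) 1, x * g x) = 0) :
    ∀ᵐ x ∂(volume.restrict (Ioo (0:ℝ) 1)), g x = 0 := by
  set μ := volume.restrict (Ioo (0:ℝ) 1) with hμdef
  haveI : IsFiniteMeasure μ := by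
    constructor
    rw [hμdef, Measure.restrict_apply_univ, Real.volume_Ioo]
    norm_num
  have hgm : AEStronglyMeasurable g μ := hg.aestronglyMeasurable
  have hgi : Integrable g μ := hg.integrable one_le_two
  set H : ℝ → ℝ := fun z => ∫ x, max 0 (x - z) * g x ∂μ with hHdef
  set G : ℝ → ℝ := fun z => ∫ x, (Ioi z).indicator g x ∂μ with hGdef
  -- Derivative of H
  have key : ∀ z₀ : ℝ, HasDerivAt H (-G z₀) z₀ := by
    intro z₀
    have hμz : μ {z₀} = 0 := by
      rw [hμdef, Measure.restrict_apply (measurableSet_singleton _)]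
      exact measure_mono_null inter_subset_left (measure_singleton _)
    have hne : ∀ᵐ x ∂μ, x ≠ z₀ := by
      rw [ae_iff]
      simpa using hμz
    have hF_meas : ∀ᶠ z in nhds z₀, AEStronglyMeasurable (fun x => max 0 (x - z) * g x) μ := by
      filter_upwards with z
      exact ((continuous_const.max (continuous_id.sub continuous_const)).aestronglyMeasurable).mul hgm
    have hF_int : Integrable (fun x => max 0 (x - z₀) * g x) μ := by
      apply Integrable.mono' ((hgi.abs).const_mul (1 + |z₀|))
        (((continuous_const.max (continuous_id.sub continuous_const)).aestronglyMeasurable).mul hgm)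
      rw [hμdef]
      filter_upwards [ae_restrict_mem measurableSet_Ioo] with x hx
      have h0 : max 0 (x - z₀) ≤ 1 + |z₀| := by
        apply max_le (by positivity)
        have := neg_abs_le z₀
        linarith [hx.2]
      simp only [Pi.mul_apply, Real.norm_eq_abs, abs_mul, id_eq, Pi.sub_apply,
        abs_of_nonneg (le_max_left (0:ℝ) (x - z₀))]
      exact mul_le_mul_of_nonneg_right h0 (abs_nonneg _)
    have hF'_meas : AEStronglyMeasurable ((Ioi z₀).indicator (fun x => -g x)) μ :=
      (hgm.neg).indicator measurableSet_Ioi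
    have h_lip : ∀ᵐ x ∂μ, LipschitzOnWith (Real.nnabs (|g x|))
        (fun z => max 0 (x - z) * g x) (Metric.ball z₀ 1) := by
      filter_upwards with x
      have : Real.nnabs (|g x|) = Real.nnabs (g x) := by
        ext
        simp [Real.coe_nnabs]
      rw [this]
      exact LipschitzWith.lipschitzOnWith (relu_lip_aux x (g x))
    have h_diff : ∀ᵐ x ∂μ, HasDerivAt (fun z => max 0 (x - z) * g x)
        ((Ioi z₀).indicator (fun x => -g x) x) z₀ := by
      filter_upwards [hne] with x hx
      rcases lt_or_gt_of_ne hx with hlt | hgt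
      · -- x < z₀ : function is 0 near z₀
        rw [indicator_of_notMem (by simpa using hlt.le)]
        apply (hasDerivAt_const z₀ (0:ℝ)).congr_of_eventuallyEq
        filter_upwards [isOpen_Ioi.mem_nhds (show x < z₀ from hlt)] with z hz
        rw [max_eq_left (by simp at hz; linarith)]
        ring
      · -- x > z₀ : function is (x - z) * g x near z₀
        rw [indicator_of_mem (by simpa using hgt)]
        have hder : HasDerivAt (fun z : ℝ => (x - z) * g x) (-g x) z₀ := by
          simpa using ((hasDerivAt_id z₀).const_sub x).mul_const (g x)
        apply hder.congr_of_eventuallyEq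
        filter_upwards [isOpen_Iio.mem_nhds (show z₀ < x from hgt)] with z hz
        rw [max_eq_right (by simp at hz; linarith)]
    obtain ⟨-, hd⟩ := hasDerivAt_integral_of_dominated_loc_of_lip (Metric.ball_mem_nhds z₀ one_pos)
      hF_meas hF_int hF'_meas h_lip (hgi.abs) h_diff
    have : ∫ x, (Ioi z₀).indicator (fun x => -g x) x ∂μ = -G z₀ := by
      rw [hGdef]
      simp only [← integral_neg]
      congr 1 with x
      by_cases h : x ∈ Ioi z₀ <;> simp [h]
    rwa [this] at hd
  have HC : Continuous H :=
    continuous_iff_continuousAt.2 fun z => (key z).differentiableAt.continuousAt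
  -- H vanishes on (0,1)
  have hH0 : ∀ z ∈ Ioo (0:ℝ) 1, H z = 0 := by
    intro z hz
    by_contra hne
    have hUopen : IsOpen (Ioo (0:ℝ) 1 ∩ {w | H w ≠ 0}) :=
      isOpen_Ioo.inter (isOpen_ne_fun HC continuous_const)
    have hpos : 0 < volume (Ioo (0:ℝ) 1 ∩ {w | H w ≠ 0}) :=
      hUopen.measure_pos volume ⟨z, hz, hne⟩
    have h1' : ∀ᵐ w ∂μ, H w = 0 := h1
    rw [ae_iff] at h1'
    have hms : MeasurableSet {w : ℝ | ¬ H w = 0} :=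
      ((isClosed_eq HC continuous_const).measurableSet).compl
    rw [hμdef, Measure.restrict_apply hms] at h1'
    rw [inter_comm] at h1'
    exact hpos.ne' h1'
  -- G vanishes everywhere
  have hG0 : ∀ z : ℝ, G z = 0 := by
    intro z
    rcases le_or_gt z 0 with hz | hz
    · have heq : (Ioi z).indicator g =ᵐ[μ] g := by
        rw [hμdef]
        filter_upwards [ae_restrict_mem measurableSet_Ioo] with x hx
        exact indicator_of_mem (lt_of_le_of_lt hz hx.1) g
      rw [hGdef]
      calc (∫ x, (Ioi z).indicator g x ∂μ) = ∫ x, g x ∂μ := integral_congr_ae heq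
        _ = 0 := h2
    rcases le_or_gt 1 z with hz1 | hz1
    · have heq : (Ioi z).indicator g =ᵐ[μ] (fun _ => (0:ℝ)) := by
        rw [hμdef]
        filter_upwards [ae_restrict_mem measurableSet_Ioo] with x hx
        exact indicator_of_notMem (by simp; linarith [hx.2]) g
      rw [hGdef]
      calc (∫ x, (Ioi z).indicator g x ∂μ) = ∫ x, (0:ℝ) ∂μ := integral_congr_ae heq
        _ = 0 := integral_zero _ _
    · have hzm : z ∈ Ioo (0:ℝ) 1 := ⟨hz, hz1⟩
      have h0 : HasDerivAt H 0 z := by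
        apply (hasDerivAt_const z (0:ℝ)).congr_of_eventuallyEq
        filter_upwards [isOpen_Ioo.mem_nhds hzm] with w hw
        exact hH0 w hw
      have := (key z).unique h0
      linarith
  -- Integral over every Ioc vanishes
  have hIoc : ∀ a b : ℝ, a < b → (∫ x, (Ioc a b).indicator g x ∂μ) = 0 := by
    intro a b hab
    have hsplit : ∀ x : ℝ, (Ioi a).indicator g x =
        (Ioc a b).indicator g x + (Ioi b).indicator g x := by
      intro x
      rcases le_or_gt x a with h | h
      · rw [indicator_of_notMem (by simpa using h),
          indicator_of_notMem (by simp; intro hax; linarith),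
          indicator_of_notMem (by simp; linarith)]
        ring
      rcases le_or_gt x b with h' | h'
      · rw [indicator_of_mem (by simpa using h), indicator_of_mem (show x ∈ Ioc a b from ⟨h, h'⟩),
          indicator_of_notMem (by simpa using h')]
        ring
      · rw [indicator_of_mem (by simpa using h),
          indicator_of_notMem (by simp; intro hax; linarith),
          indicator_of_mem (by simpa using h')]
        ring
    have hint : (∫ x, (Ioi a).indicator g x ∂μ) =
        (∫ x, (Ioc a b).indicator g x ∂μ) + ∫ x, (Ioi b).indicator g x ∂μ := by
      rw [← integral_add (hgi.indicator measurableSet_Ioc) (hgi.indicator measurableSet_Ioi)]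
      exact integral_congr_ae (Filter.Eventually.of_forall hsplit)
    have ha : (∫ x, (Ioi a).indicator g x ∂μ) = 0 := hG0 a
    have hb : (∫ x, (Ioi b).indicator g x ∂μ) = 0 := hG0 b
    linarith
  -- Positive and negative part measures
  set fp : ℝ → ENNReal := fun x => ENNReal.ofReal (g x) with hfp
  set fm : ℝ → ENNReal := fun x => ENNReal.ofReal (-g x) with hfm
  have hfpm : AEMeasurable fp μ := ENNReal.measurable_ofReal.comp_aemeasurable hgm.aemeasurable
  have hfmm : AEMeasurable fm μ :=
    ENNReal.measurable_ofReal.comp_aemeasurable hgm.aemeasurable.neg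
  have hfin_p : (∫⁻ x, fp x ∂μ) ≠ ⊤ := by
    refine ne_top_of_le_ne_top hgi.2.ne ?_
    apply lintegral_mono
    intro x
    simp only [hfp, Real.enorm_eq_ofReal_abs]
    exact ENNReal.ofReal_le_ofReal (le_abs_self _)
  have hfin_m : (∫⁻ x, fm x ∂μ) ≠ ⊤ := by
    refine ne_top_of_le_ne_top hgi.2.ne ?_
    apply lintegral_mono
    intro x
    simp only [hfm, Real.enorm_eq_ofReal_abs]
    exact ENNReal.ofReal_le_ofReal (neg_le_abs _)
  have key2 : ∀ s : Set ℝ, MeasurableSet s → (∫ x, s.indicator g x ∂μ) = 0 →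
      (μ.withDensity fp) s = (μ.withDensity fm) s := by
    intro s hs h0
    rw [integral_indicator hs,
      integral_eq_lintegral_pos_part_sub_lintegral_neg_part (hgi.restrict (s := s)),
      sub_eq_zero] at h0
    have hpf : (∫⁻ x in s, fp x ∂μ) ≠ ⊤ :=
      ne_top_of_le_ne_top hfin_p (setLIntegral_le_lintegral s fp)
    have hmf : (∫⁻ x in s, fm x ∂μ) ≠ ⊤ :=
      ne_top_of_le_ne_top hfin_m (setLIntegral_le_lintegral s fm)
    rw [withDensity_apply _ hs, withDensity_apply _ hs]
    exact (ENNReal.toReal_eq_toReal_iff' hpf hmf).1 h0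
  haveI : IsFiniteMeasure (μ.withDensity fp) := isFiniteMeasure_withDensity hfin_p
  have huniv : (μ.withDensity fp) univ = (μ.withDensity fm) univ := by
    apply key2 univ MeasurableSet.univ
    simpa using h2
  have hν : μ.withDensity fp = μ.withDensity fm := by
    apply Measure.ext_of_Ioc_finite _ _ huniv
    intro a b hab
    exact key2 (Ioc a b) measurableSet_Ioc (hIoc a b hab)
  have hae : fp =ᵐ[μ] fm := (withDensity_eq_iff_of_sigmaFinite hfpm hfmm).1 hν
  filter_upwards [hae] with x hx
  by_contra hgx
  rw [hfp, hfm] at hx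
  simp only at hx
  rcases lt_or_gt_of_ne hgx with h | h
  · rw [ENNReal.ofReal_eq_zero.2 h.le] at hx
    exact (ENNReal.ofReal_pos.2 (by linarith : (0:ℝ) < -g x)).ne' hx.symm
  · rw [ENNReal.ofReal_eq_zero.2 (by linarith : -g x ≤ 0)] at hx
    exact (ENNReal.ofReal_pos.2 h).ne' hx
end

section
/- Let H, W be Hilbert spaces, T : W → H a bounded linear operator with trivial kernel, f = Tφ for some φ ∈ W, and 0 < ε with 2ε‖T*T‖ < 1. Define φ_{n+1} = φ_n + 2εT*(f − Tφ_n). Then φ_n − φ = (1 − 2εT*T)ⁿ(φ_0 − φ) for all n, and if moreover T is compact, then ‖φ_n − φ‖ → 0 as n → ∞. -/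
open Filter

open scoped RealInnerProductSpace

set_option maxHeartbeats 1000000

theorem stmt_5 {H W : Type*}
    [NormedAddCommGroup H] [InnerProductSpace ℝ H] [CompleteSpace H]
    [NormedAddCommGroup W] [InnerProductSpace ℝ W] [CompleteSpace W]
    (T : W →L[ℝ] H) (hinj : Function.Injective T)
    (φ : W) (f : H) (hf : f = T φ)
    (ε : ℝ) (hε0 : 0 < ε) (hε : 2 * ε * ‖T.adjoint ∘L T‖ < 1)
    (φseq : ℕ → W)
    (hiter : ∀ n : ℕ, φseq (n + 1) = φseq n + (2 * ε) • T.adjoint (f - T (φseq n))) :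
    (∀ n : ℕ, φseq n - φ = ((1 - (2 * ε) • (T.adjoint ∘L T)) ^ n) (φseq 0 - φ)) ∧
    (IsCompactOperator T →
      Tendsto (fun n : ℕ => ‖φseq n - φ‖) atTop (nhds 0)) := by
  set A : W →L[ℝ] W := T.adjoint ∘L T with hA
  set S : W →L[ℝ] W := 1 - (2 * ε) • A with hS
  have hSapp : ∀ v : W, S v = v - (2 * ε) • (T.adjoint (T v)) := by
    intro v
    simp [hS, hA, ContinuousLinearMap.sub_apply, ContinuousLinearMap.smul_apply,
      ContinuousLinearMap.one_apply, ContinuousLinearMap.comp_apply]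
  -- Part 1
  have hstep : ∀ n, φseq (n + 1) - φ = S (φseq n - φ) := by
    intro n
    rw [hiter n, hf, hSapp]
    rw [show T φ - T (φseq n) = -(T (φseq n - φ)) by rw [map_sub]; abel]
    rw [map_neg, smul_neg]
    abel
  have hpart1 : ∀ n, φseq n - φ = (S ^ n) (φseq 0 - φ) := by
    intro n
    induction n with
    | zero => simp
    | succ n ih => rw [hstep n, ih, pow_succ', ContinuousLinearMap.mul_apply]
  refine ⟨hpart1, fun _ => ?_⟩
  -- Part 2
  set x0 : W := φseq 0 - φ with hx0
  set y : ℕ → W := fun n => (S ^ n) x0 with hy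
  have hyst : ∀ n, y (n + 1) = S (y n) := by
    intro n
    simp only [hy, pow_succ', ContinuousLinearMap.mul_apply]
  -- symmetry of S
  have hsym : ∀ a b : W, ⟪S a, b⟫ = ⟪a, S b⟫ := by
    intro a b
    rw [hSapp, hSapp, inner_sub_left, inner_sub_right, real_inner_smul_left,
      real_inner_smul_right, ContinuousLinearMap.adjoint_inner_left,
      ContinuousLinearMap.adjoint_inner_right]
  have hsymn : ∀ n, ∀ a b : W, ⟪(S ^ n) a, b⟫ = ⟪a, (S ^ n) b⟫ := by
    intro n
    induction n with
    | zero => intro a b; simp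
    | succ n ih =>
      intro a b
      rw [pow_succ', ContinuousLinearMap.mul_apply, hsym, ih,
        ← ContinuousLinearMap.mul_apply, ← pow_succ, ← pow_succ']
  -- norm of T and the key inequality
  have hnT : ‖T.adjoint‖ = ‖T‖ :=
    (ContinuousLinearMap.adjoint : (W →L[ℝ] H) ≃ₗᵢ⋆[ℝ] (H →L[ℝ] W)).norm_map T
  have hnA : ‖A‖ = ‖T‖ * ‖T‖ := ContinuousLinearMap.norm_adjoint_comp_self T
  have hεT : 2 * ε * (‖T‖ * ‖T‖) < 1 := by rw [← hnA]; exact hε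
  have hineq : ∀ v : W, ‖S v‖ ^ 2 + 2 * ε * ‖T v‖ ^ 2 ≤ ‖v‖ ^ 2 := by
    intro v
    have hAv : ⟪A v, v⟫ = ‖T v‖ ^ 2 := by
      rw [hA, ContinuousLinearMap.comp_apply, ContinuousLinearMap.adjoint_inner_left,
        real_inner_self_eq_norm_sq]
    have hvA : ⟪v, A v⟫ = ‖T v‖ ^ 2 := by rw [real_inner_comm]; exact hAv
    have hexp : ‖S v‖ ^ 2 = ‖v‖ ^ 2 - 4 * ε * ‖T v‖ ^ 2 + 4 * ε ^ 2 * ‖A v‖ ^ 2 := by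
      have : S v = v - (2 * ε) • (A v) := by
        rw [hSapp]; rw [hA]; rfl
      rw [← real_inner_self_eq_norm_sq (S v), this, inner_sub_left, inner_sub_right,
        inner_sub_right, real_inner_smul_left, real_inner_smul_left, real_inner_smul_right,
        real_inner_smul_right, real_inner_self_eq_norm_sq, real_inner_self_eq_norm_sq,
        hAv, hvA]
      ring
    have hAvle : ‖A v‖ ≤ ‖T‖ * ‖T v‖ := by
      have h1 : ‖A v‖ = ‖T.adjoint (T v)‖ := by rw [hA]; rfl
      rw [h1, ← hnT]
      exact T.adjoint.le_opNorm (T v)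
    have h2 : ‖A v‖ ^ 2 ≤ (‖T‖ * ‖T v‖) ^ 2 := by
      have := norm_nonneg (A v)
      nlinarith [norm_nonneg (A v), norm_nonneg (T v), norm_nonneg T]
    nlinarith [norm_nonneg (T v), norm_nonneg T, sq_nonneg (‖T v‖),
      mul_nonneg (mul_nonneg (le_of_lt hε0) (norm_nonneg (T v))) (norm_nonneg (T v))]
  set a : ℕ → ℝ := fun n => ‖y n‖ ^ 2 with ha
  have hsucc : ∀ n, a (n + 1) + 2 * ε * ‖T (y n)‖ ^ 2 ≤ a n := by
    intro n
    have := hineq (y n)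
    rw [← hyst n] at this
    exact this
  have hanti : Antitone a := by
    apply antitone_nat_of_succ_le
    intro n
    have := hsucc n
    nlinarith [sq_nonneg (‖T (y n)‖), le_of_lt hε0,
      mul_nonneg (mul_nonneg (by norm_num : (0:ℝ) ≤ 2) (le_of_lt hε0)) (sq_nonneg (‖T (y n)‖))]
  have hbdd : BddBelow (Set.range a) := ⟨0, by rintro r ⟨n, rfl⟩; positivity⟩
  have hLa : Tendsto a atTop (nhds (⨅ n, a n)) := tendsto_atTop_ciInf hanti hbdd
  have hdiff : Tendsto (fun n => a n - a (n + 1)) atTop (nhds 0) := by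
    have h2 : Tendsto (fun n => a (n + 1)) atTop (nhds (⨅ n, a n)) :=
      hLa.comp (tendsto_add_atTop_nat 1)
    have h3 := hLa.sub h2
    rw [sub_self] at h3
    exact h3
  have hT0sq : Tendsto (fun n => ‖T (y n)‖ ^ 2) atTop (nhds 0) := by
    apply squeeze_zero (fun n => sq_nonneg _) (g := fun n => (a n - a (n + 1)) * (2 * ε)⁻¹)
    · intro n
      have h1 := hsucc n
      have h2 : (0:ℝ) < 2 * ε := by linarith
      calc ‖T (y n)‖ ^ 2 = (2 * ε * ‖T (y n)‖ ^ 2) * (2 * ε)⁻¹ := by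
              field_simp
        _ ≤ (a n - a (n + 1)) * (2 * ε)⁻¹ := by
            apply mul_le_mul_of_nonneg_right _ (le_of_lt (inv_pos.mpr h2))
            linarith
    · simpa using hdiff.mul_const (2 * ε)⁻¹
  have hT0 : Tendsto (fun n => ‖T (y n)‖) atTop (nhds 0) := by
    have h := (Real.continuous_sqrt.tendsto 0).comp hT0sq
    simp only [Function.comp, Real.sqrt_zero] at h
    exact h.congr (fun n => Real.sqrt_sq (norm_nonneg _))
  -- a n = ⟪x0, y (2n)⟫
  have hkey : ∀ n, a n = ⟪x0, y (2 * n)⟫ := by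
    intro n
    have h1 : y (2 * n) = (S ^ n) ((S ^ n) x0) := by
      simp only [hy, two_mul, pow_add, ContinuousLinearMap.mul_apply]
    rw [h1, ← hsymn n]
    simp only [ha, hy]
    rw [real_inner_self_eq_norm_sq]
  have hbound : ∀ n, ‖y n‖ ≤ ‖x0‖ := by
    intro n
    have h1 : a n ≤ a 0 := hanti (Nat.zero_le n)
    have h2 : a 0 = ‖x0‖ ^ 2 := by simp [ha, hy]
    rw [h2] at h1
    have h3 := Real.sqrt_le_sqrt h1
    rwa [Real.sqrt_sq (norm_nonneg _), Real.sqrt_sq (norm_nonneg _)] at h3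
  -- density of range of adjoint
  have horth : (LinearMap.range (T.adjoint : H →ₗ[ℝ] W) : Submodule ℝ W)ᗮ = ⊥ := by
    rw [Submodule.eq_bot_iff]
    intro v hv
    have h1 : ⟪T.adjoint (T v), v⟫ = 0 :=
      hv (T.adjoint (T v)) (LinearMap.mem_range.mpr ⟨T v, rfl⟩)
    rw [ContinuousLinearMap.adjoint_inner_left, real_inner_self_eq_norm_sq] at h1
    have h2 : T v = 0 := by
      have := sq_eq_zero_iff.mp h1.symm.symm
      rw [← norm_eq_zero]
      nlinarith [norm_nonneg (T v)]
    have h3 : T v = T 0 := by rw [h2, map_zero]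
    exact hinj h3
  have hdense : Dense ((LinearMap.range (T.adjoint : H →ₗ[ℝ] W) : Submodule ℝ W) : Set W) := by
    rw [Submodule.dense_iff_topologicalClosure_eq_top,
      ← Submodule.orthogonal_orthogonal_eq_closure, horth, Submodule.bot_orthogonal_eq_top]
  -- a n → 0
  have haz : Tendsto a atTop (nhds 0) := by
    rw [Metric.tendsto_atTop]
    intro η hη
    set δ : ℝ := η / (2 * (‖x0‖ + 1)) with hδ
    have hδpos : 0 < δ := by
      apply div_pos hη
      positivity
    obtain ⟨w, hwmem, hwd⟩ := Metric.mem_closure_iff.mp (hdense x0) δ hδpos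
    obtain ⟨g, hg⟩ := LinearMap.mem_range.mp hwmem
    have hη2 : 0 < η / (2 * (‖g‖ + 1)) := by positivity
    obtain ⟨N, hN⟩ := (Metric.tendsto_atTop.mp hT0) (η / (2 * (‖g‖ + 1))) hη2
    refine ⟨N, fun n hn => ?_⟩
    have h2n : N ≤ 2 * n := le_trans hn (by omega)
    have hTy := hN (2 * n) h2n
    rw [Real.dist_eq, sub_zero, abs_of_nonneg (norm_nonneg _)] at hTy
    have hsplit : a n = ⟪x0 - w, y (2 * n)⟫ + ⟪g, T (y (2 * n))⟫ := by
      rw [hkey n, ← hg]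
      rw [← ContinuousLinearMap.adjoint_inner_left T (y (2 * n)) g]
      conv_rhs => rw [inner_sub_left]
      exact (sub_add_cancel _ _).symm
    have hb1 : |⟪x0 - w, y (2 * n)⟫| ≤ δ * ‖x0‖ := by
      calc |⟪x0 - w, y (2 * n)⟫| ≤ ‖x0 - w‖ * ‖y (2 * n)‖ := abs_real_inner_le_norm _ _
        _ ≤ δ * ‖x0‖ := by
            apply mul_le_mul _ (hbound _) (norm_nonneg _) (le_of_lt hδpos)
            rw [← dist_eq_norm]
            exact le_of_lt hwd
    have hb2 : |⟪g, T (y (2 * n))⟫| ≤ ‖g‖ * ‖T (y (2 * n))‖ := abs_real_inner_le_norm _ _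
    rw [Real.dist_eq, sub_zero]
    have hanonneg : 0 ≤ a n := sq_nonneg _
    rw [abs_of_nonneg hanonneg]
    have hd1 : δ * ‖x0‖ < η / 2 := by
      rw [hδ]
      rw [div_mul_eq_mul_div, div_lt_div_iff₀ (by positivity) (by norm_num)]
      nlinarith [norm_nonneg x0]
    have hd2 : ‖g‖ * ‖T (y (2 * n))‖ < η / 2 := by
      have h1 : ‖g‖ * ‖T (y (2 * n))‖ ≤ ‖g‖ * (η / (2 * (‖g‖ + 1))) :=
        mul_le_mul_of_nonneg_left (le_of_lt hTy) (norm_nonneg g)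
      have h2 : ‖g‖ * (η / (2 * (‖g‖ + 1))) < η / 2 := by
        rw [mul_div_assoc', div_lt_div_iff₀ (by positivity) (by norm_num)]
        nlinarith [norm_nonneg g]
      linarith
    calc a n ≤ |⟪x0 - w, y (2 * n)⟫| + |⟪g, T (y (2 * n))⟫| := by
          rw [hsplit]; exact le_trans (le_abs_self _) (abs_add_le _ _)
      _ < η / 2 + η / 2 := by
          apply add_lt_add_of_le_of_lt (le_trans hb1 (le_of_lt hd1)) (lt_of_le_of_lt hb2 hd2)
      _ = η := by ring
  -- conclude
  have hfinal : Tendsto (fun n => ‖y n‖) atTop (nhds 0) := by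
    have h := (Real.continuous_sqrt.tendsto 0).comp haz
    simp only [Function.comp, Real.sqrt_zero] at h
    exact h.congr (fun n => Real.sqrt_sq (norm_nonneg _))
  have : (fun n : ℕ => ‖φseq n - φ‖) = fun n => ‖y n‖ := by
    funext n
    rw [hpart1 n]
  rw [this]
  exact hfinal
end

section
/- Fix N ∈ ℕ with N ≥ 2 and t_j = j/N. Define T* : ℝ^{N+1} → ℝ^{N−1} ⊕ ℝ² by T*g = ({(1/N)Σ_{ℓ=0}^{N} ReLU(t_ℓ − t_j) g_ℓ}_{j=1}^{N−1}, (1/N)Σ_{j=0}^N g_j, (1/N)Σ_{j=0}^N g_j t_j). Then T* is injective: T*g = 0 implies g = 0. -/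
open Finset

/-- The discrete adjoint
`T*g = ({(1/N)Σ_ℓ ReLU(t_ℓ − t_j) g_ℓ}_j, (1/N)Σ_j g_j, (1/N)Σ_j g_j t_j)`
is injective. -/
theorem stmt_9 (N : ℕ) (hN : 2 ≤ N) (g : Fin (N + 1) → ℝ)
    (h1 : ∀ j : Fin (N - 1),
      (1 / (N : ℝ)) * ∑ ℓ : Fin (N + 1),
        max 0 ((ℓ : ℝ) / N - ((j : ℝ) + 1) / N) * g ℓ = 0)
    (h2 : (1 / (N : ℝ)) * ∑ j : Fin (N + 1), g j = 0)
    (h3 : (1 / (N : ℝ)) * ∑ j : Fin (N + 1), g j * ((j : ℝ) / N) = 0) :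
    g = 0 := by
  have hNR : (0:ℝ) < N := by
    have : 0 < N := by omega
    exact_mod_cast this
  have hNne : (N:ℝ) ≠ 0 := ne_of_gt hNR
  have h1N : (1 / (N:ℝ)) ≠ 0 := by positivity
  -- the key function F
  set F : ℕ → ℝ := fun j => ∑ ℓ : Fin (N+1), ((ℓ.val - j : ℕ) : ℝ) * g ℓ with hFdef
  have maxeq : ∀ a b : ℕ, max 0 ((a:ℝ)/N - (b:ℝ)/N) = ((a - b : ℕ):ℝ)/N := by
    intro a b
    rw [div_sub_div_same]
    rcases le_total b a with h | h
    · rw [Nat.cast_sub h]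
      exact max_eq_right (div_nonneg (sub_nonneg.mpr (by exact_mod_cast h)) hNR.le)
    · rw [Nat.sub_eq_zero_of_le h, max_eq_left]
      · simp
      · apply div_nonpos_of_nonpos_of_nonneg _ (le_of_lt hNR)
        have : (b:ℝ) ≥ a := by exact_mod_cast h
        linarith
  have key : ∀ j ≤ N, F j = 0 := by
    intro j hj
    rcases Nat.eq_zero_or_pos j with rfl | hj1
    · -- use h3
      have h3' : ∑ ℓ : Fin (N + 1), g ℓ * ((ℓ : ℝ) / N) = 0 :=
        by exact (mul_eq_zero.mp h3).resolve_left h1N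
      have : F 0 = N * ∑ ℓ : Fin (N + 1), g ℓ * ((ℓ : ℝ) / N) := by
        rw [hFdef, Finset.mul_sum]
        apply Finset.sum_congr rfl
        intro ℓ _
        simp only [Nat.sub_zero]
        field_simp
      rw [this, h3', mul_zero]
    · rcases Nat.lt_or_ge j N with hjN | hjN
      · -- 1 ≤ j ≤ N-1 : use h1
        have hjlt : j - 1 < N - 1 := by omega
        have := h1 ⟨j - 1, hjlt⟩
        have hcast : ((⟨j - 1, hjlt⟩ : Fin (N-1)) : ℝ) + 1 = (j : ℝ) := by
          have : ((j - 1 : ℕ) : ℝ) = (j : ℝ) - 1 := by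
            rw [Nat.cast_sub hj1]; simp
          simp [this]
        rw [hcast] at this
        have hsum : ∑ ℓ : Fin (N + 1),
            max 0 ((ℓ : ℝ) / N - (j : ℝ) / N) * g ℓ = (1/N) * F j := by
          rw [hFdef, Finset.mul_sum]
          apply Finset.sum_congr rfl
          intro ℓ _
          rw [maxeq]
          ring
        rw [hsum] at this
        have := (mul_eq_zero.mp this).resolve_left h1N
        exact (mul_eq_zero.mp this).resolve_left h1N
      · -- j = N
        rw [hFdef]
        apply Finset.sum_eq_zero
        intro ℓ _
        have : ℓ.val - j = 0 := by have := ℓ.isLt; omega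
        simp [this]
  -- tail sums
  set G : ℕ → ℝ := fun k => ∑ ℓ : Fin (N+1), (if k ≤ ℓ.val then g ℓ else 0) with hGdef
  have hFG : ∀ j : ℕ, F j - F (j+1) = G (j+1) := by
    intro j
    rw [hFdef, hGdef, ← Finset.sum_sub_distrib]
    apply Finset.sum_congr rfl
    intro ℓ _
    rcases le_or_gt (j+1) ℓ.val with h | h
    · have h2' : ℓ.val - j = (ℓ.val - (j+1)) + 1 := by omega
      rw [if_pos h, h2']
      push_cast
      ring
    · have e1 : ℓ.val - j = 0 := by omega
      have e2 : ℓ.val - (j+1) = 0 := by omega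
      rw [if_neg (by omega), e1, e2]
      simp
  have hG : ∀ k, 1 ≤ k → k ≤ N → G k = 0 := by
    intro k hk1 hk2
    have : k - 1 + 1 = k := by omega
    rw [← this, ← hFG, key _ (by omega), key _ (by omega), sub_zero]
  have hGg : ∀ k (hk : k ≤ N), G k - G (k+1) = g ⟨k, by omega⟩ := by
    intro k hk
    rw [hGdef, ← Finset.sum_sub_distrib]
    have : ∀ ℓ : Fin (N+1),
        (if k ≤ ℓ.val then g ℓ else 0) - (if k+1 ≤ ℓ.val then g ℓ else 0)
        = if ℓ = ⟨k, by omega⟩ then g ℓ else 0 := by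
      intro ℓ
      rcases lt_trichotomy ℓ.val k with h | h | h
      · rw [if_neg (by omega), if_neg (by omega), if_neg (by simp [Fin.ext_iff]; omega)]
        simp
      · rw [if_pos (by omega), if_neg (by omega), if_pos (by simp [Fin.ext_iff, h])]
        simp
      · rw [if_pos (by omega), if_pos (by omega), if_neg (by simp [Fin.ext_iff]; omega)]
        simp
    rw [Finset.sum_congr rfl (fun ℓ _ => this ℓ)]
    simp
  -- g vanishes for indices ≥ 1
  have hg1 : ∀ m : Fin (N+1), 1 ≤ m.val → g m = 0 := by
    intro m hm
    have hmN : m.val ≤ N := by omega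
    have heq : (⟨m.val, by omega⟩ : Fin (N+1)) = m := Fin.ext rfl
    have := hGg m.val hmN
    rw [heq] at this
    rcases Nat.lt_or_ge m.val N with h | h
    · rw [hG _ hm hmN, hG _ (by omega) (by omega), sub_zero] at this
      exact this.symm
    · have hmN' : m.val = N := by omega
      have hGN1 : G (N+1) = 0 := by
        rw [hGdef]
        apply Finset.sum_eq_zero
        intro ℓ _
        rw [if_neg (by omega)]
      rw [hmN', hG _ (by omega) le_rfl, hGN1, sub_zero] at this
      exact this.symm
  -- g 0 = 0 from h2
  have hsum : ∑ j : Fin (N+1), g j = 0 :=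
    (mul_eq_zero.mp h2).resolve_left h1N
  have hg0 : g ⟨0, by omega⟩ = 0 := by
    have : ∑ j : Fin (N+1), g j = g ⟨0, by omega⟩ := by
      apply Finset.sum_eq_single_of_mem _ (Finset.mem_univ _)
      intro j _ hj
      apply hg1
      have : j.val ≠ 0 := fun h => hj (Fin.ext h)
      omega
    rw [← this, hsum]
  funext m
  show g m = 0
  rcases Nat.eq_zero_or_pos m.val with h | h
  · rw [← hg0]; congr 1; exact Fin.ext h
  · exact hg1 m h
end

section
/- For all x, y ∈ ℝ, ∫_ℝ e^{−|x−z|} e^{−|y−z|} dz = (1 + |x−y|) e^{−|x−y|}. -/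
/-!
For `y ≤ x`, the exponent `|x - z| + |y - z|` is `x + y - 2z` left of `y`, the constant `x - y`
on `[y, x]`, and `2z - x - y` right of `x`. Each exponential tail contributes `e^{-(x-y)}/2` and
the middle interval contributes `(x - y) e^{-(x-y)}`; the case `x ≤ y` follows by symmetry.
-/

open MeasureTheory Set Real

lemma integrable_exp_neg_abs : Integrable fun z : ℝ ↦ exp (-|z|) := by
  rw [← integrableOn_univ, ← Iic_union_Ioi (a := 0)]
  refine ((integrableOn_exp_Iic 0).congr_fun (fun z hz ↦ ?_) measurableSet_Iic).union
    ((exp_neg_integrableOn_Ioi 0 one_pos).congr_fun (fun z hz ↦ ?_) measurableSet_Ioi)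
  · rw [abs_of_nonpos hz, neg_neg]
  · simp only [neg_one_mul, abs_of_pos (mem_Ioi.1 hz)]

lemma integrable_exp_neg_abs_sub_mul (x y : ℝ) :
    Integrable fun z ↦ exp (-|x - z|) * exp (-|y - z|) := by
  refine (integrable_exp_neg_abs.comp_sub_left y).mono' (by fun_prop) (ae_of_all _ fun z ↦ ?_)
  rw [norm_of_nonneg (by positivity)]
  exact mul_le_of_le_one_left (exp_pos _).le (exp_le_one_iff.2 (by simp))

section

variable {x y : ℝ}

lemma eqOn_Iic_exp_neg_abs_sub_mul (h : y ≤ x) :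
    EqOn (fun z ↦ exp (-|x - z|) * exp (-|y - z|)) (fun z ↦ exp (-(x + y)) * exp (2 * z))
      (Iic y) := fun z hz ↦ by
  simp only [← exp_add, abs_of_nonneg (sub_nonneg.2 (hz.trans h)),
    abs_of_nonneg (sub_nonneg.2 (show z ≤ y from hz))]
  ring_nf

lemma eqOn_Icc_exp_neg_abs_sub_mul :
    EqOn (fun z ↦ exp (-|x - z|) * exp (-|y - z|)) (fun _ ↦ exp (-(x - y))) (Icc y x) :=
  fun z hz ↦ by
  simp only [← exp_add, abs_of_nonneg (sub_nonneg.2 hz.2), abs_of_nonpos (sub_nonpos.2 hz.1)]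
  ring_nf

lemma eqOn_Ioi_exp_neg_abs_sub_mul (h : y ≤ x) :
    EqOn (fun z ↦ exp (-|x - z|) * exp (-|y - z|)) (fun z ↦ exp (x + y) * exp (-2 * z))
      (Ioi x) := fun z hz ↦ by
  have hxz : x ≤ z := le_of_lt hz
  simp only [← exp_add, abs_of_nonpos (sub_nonpos.2 hxz),
    abs_of_nonpos (sub_nonpos.2 (h.trans hxz))]
  ring_nf

lemma integral_exp_neg_abs_sub_mul_of_le (h : y ≤ x) :
    ∫ z, exp (-|x - z|) * exp (-|y - z|) = (1 + (x - y)) * exp (-(x - y)) := by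
  have hint {s : Set ℝ} : IntegrableOn (fun z ↦ exp (-|x - z|) * exp (-|y - z|)) s :=
    (integrable_exp_neg_abs_sub_mul x y).integrableOn
  have hleft : ∫ z in Iic y, exp (-|x - z|) * exp (-|y - z|) = exp (-(x - y)) / 2 := by
    rw [setIntegral_congr_fun measurableSet_Iic (eqOn_Iic_exp_neg_abs_sub_mul h),
      integral_const_mul, integral_exp_mul_Iic two_pos, mul_div_assoc', ← exp_add]
    ring_nf
  have hmid : ∫ z in y..x, exp (-|x - z|) * exp (-|y - z|) = (x - y) * exp (-(x - y)) := by
    rw [intervalIntegral.integral_congr (uIcc_of_le h ▸ eqOn_Icc_exp_neg_abs_sub_mul),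
      intervalIntegral.integral_const, smul_eq_mul]
  have hright : ∫ z in Ioi x, exp (-|x - z|) * exp (-|y - z|) = exp (-(x - y)) / 2 := by
    rw [setIntegral_congr_fun measurableSet_Ioi (eqOn_Ioi_exp_neg_abs_sub_mul h),
      integral_const_mul, integral_exp_mul_Ioi (by norm_num), neg_div_neg_eq,
      mul_div_assoc', ← exp_add]
    ring_nf
  rw [← intervalIntegral.integral_Iic_add_Ioi hint hint,
    ← intervalIntegral.integral_interval_add_Ioi hint hint, hleft, hmid, hright]
  ring

end

theorem stmt_14 (x y : ℝ) :
    ∫ z : ℝ, Real.exp (-|x - z|) * Real.exp (-|y - z|)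
      = (1 + |x - y|) * Real.exp (-|x - y|) := by
  wlog h : y ≤ x generalizing x y
  · simpa only [mul_comm, abs_sub_comm y x] using this y x (le_of_not_ge h)
  rw [abs_of_nonneg (sub_nonneg.2 h)]
  exact integral_exp_neg_abs_sub_mul_of_le h
end
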